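/- Let $a_1 \ge 0$ and $A > 0$, and define recursively $a_{m+1} = \max(a_m - A a_m^3, 0)$. If $a_1 \le A^{-1/2}$, then the sequence $(a_m)$ is nonincreasing and $a_m \le A^{-1/2} m^{-1/2}$ for all $m \ge 1$. -/

import Mathlib

/-!
Put `s = A a_m²`. The recursion gives `A a_{m+1}² ≤ A (a_m - A a_m³)² = s (1 - s)²`, so it suffices to
propagate the invariant `A a_m² m ≤ 1`: if `s x ≤ 1` with `x ≥ 1`, then
`s (1 - s)² (x + 1) ≤ (1 - s)² (1 + s) = (1 - s)(1 - s²) ≤ 1`.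
-/

lemma mul_one_sub_sq_mul_add_one_le_one {s x : ℝ} (hx : 1 ≤ x) (hs : 0 ≤ s) (hsx : s * x ≤ 1) :
    s * (1 - s) ^ 2 * (x + 1) ≤ 1 := by
  have hs1 : s ≤ 1 := by nlinarith
  calc s * (1 - s) ^ 2 * (x + 1) = (s * x) * (1 - s) ^ 2 + s * (1 - s) ^ 2 := by ring
    _ ≤ 1 * (1 - s) ^ 2 + s * (1 - s) ^ 2 := by gcongr
    _ = 1 - s * (1 - s) * (1 + s) - s ^ 2 := by ring
    _ ≤ 1 := by nlinarith [mul_nonneg (mul_nonneg hs (sub_nonneg.2 hs1)) (by linarith : 0 ≤ 1 + s)]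

lemma mul_max_sub_mul_pow_three_sq_mul_add_one_le_one {A a x : ℝ} (hA : 0 ≤ A) (hx : 1 ≤ x)
    (h : A * a ^ 2 * x ≤ 1) : A * max (a - A * a ^ 3) 0 ^ 2 * (x + 1) ≤ 1 := by
  have hmax : max (a - A * a ^ 3) 0 ^ 2 ≤ (a - A * a ^ 3) ^ 2 := by
    rcases le_total (a - A * a ^ 3) 0 with hneg | hpos
    · rw [max_eq_right hneg]; nlinarith
    · rw [max_eq_left hpos]
  calc A * max (a - A * a ^ 3) 0 ^ 2 * (x + 1)
      ≤ A * (a - A * a ^ 3) ^ 2 * (x + 1) := by gcongr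
    _ = (A * a ^ 2) * (1 - A * a ^ 2) ^ 2 * (x + 1) := by ring
    _ ≤ 1 := mul_one_sub_sq_mul_add_one_le_one hx (by positivity) (by linarith)

lemma max_sub_mul_pow_three_le {A a : ℝ} (hA : 0 ≤ A) (ha : 0 ≤ a) :
    max (a - A * a ^ 3) 0 ≤ a :=
  max_le (by nlinarith [mul_nonneg hA (pow_nonneg ha 3)]) ha

lemma le_one_div_sqrt_mul_one_div_sqrt_iff {A a x : ℝ} (hA : 0 < A) (hx : 0 < x) (ha : 0 ≤ a) :
    a ≤ 1 / Real.sqrt A * (1 / Real.sqrt x) ↔ A * a ^ 2 * x ≤ 1 := by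
  rw [one_div_mul_one_div, ← Real.sqrt_mul hA.le, le_div_iff₀ (by positivity),
    ← pow_le_one_iff_of_nonneg (by positivity) two_ne_zero, mul_pow, Real.sq_sqrt (by positivity)]
  ring_nf

theorem stmt_16 (a : ℕ → ℝ) (A : ℝ) (hA : 0 < A)
    (h1 : 0 ≤ a 1) (hsmall : a 1 ≤ 1 / Real.sqrt A)
    (hrec : ∀ m, 1 ≤ m → a (m + 1) = max (a m - A * (a m) ^ 3) 0) :
    (∀ m, 1 ≤ m → a (m + 1) ≤ a m) ∧
    (∀ m : ℕ, 1 ≤ m → a m ≤ (1 / Real.sqrt A) * (1 / Real.sqrt m)) := by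
  have hnonneg : ∀ m, 1 ≤ m → 0 ≤ a m := by
    intro m hm
    induction m, hm using Nat.le_induction with
    | base => exact h1
    | succ m hm _ => rw [hrec m hm]; exact le_max_right _ _
  refine ⟨fun m hm => hrec m hm ▸ max_sub_mul_pow_three_le hA.le (hnonneg m hm), fun m hm => ?_⟩
  rw [le_one_div_sqrt_mul_one_div_sqrt_iff hA (by positivity) (hnonneg m hm)]
  induction m, hm using Nat.le_induction with
  | base =>
    simpa using (le_one_div_sqrt_mul_one_div_sqrt_iff hA one_pos h1).1 (by simpa using hsmall)
  | succ m hm ih =>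
    rw [hrec m hm, Nat.cast_succ]
    exact mul_max_sub_mul_pow_three_sq_mul_add_one_le_one hA.le (by exact_mod_cast hm) ih
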